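/- arXiv:2409.12557 — 2 statements merged into one kernel-verified Lean document; each statement's English description precedes it below -/
import Mathlib

section
/- Let ψ: ℕ → (0, 1/4) and q ∈ ℕ with q ≥ 1. Then A_q ⊆ ⋃_{j ∈ I_q} R_{q,j}, where A_q = {(x₁,x₂) ∈ [0,1]² : ‖qx₁‖·‖qx₂‖ < ψ(q)}, R_{q,j} = {(x₁,x₂) ∈ [0,1]² : ‖qx₁‖ < q·2^{−(j−1)} and ‖qx₂‖ < ψ(q)·2^j/q}, and I_q = {j ∈ ℕ : 2q ≤ 2^j ≤ q/ψ(q)}. -/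
/-!
Write `d₁ = ‖qx₁‖`, `d₂ = ‖qx₂‖` and take the largest `j` with `2^j ≤ q/ψ(q)` and
`d₁·2^j < 2q`. Maximality leaves two cases. If `2^{j+1} > q/ψ(q)`, then `2^j > q/(2ψ(q)) ≥ 2q`
and `ψ(q)·2^j > q/2 ≥ d₂q`. If instead `d₁·2^{j+1} ≥ 2q`, then `2^j ≥ q/d₁ ≥ 2q` and
`d₂q ≤ d₁d₂·2^j < ψ(q)·2^j`.
-/

/-- Distance from a real number to the nearest integer. -/
noncomputable def nint (x : ℝ) : ℝ := |x - round x|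

/-- `A_q = {(x₁,x₂) ∈ [0,1]² : ‖qx₁‖·‖qx₂‖ < ψ(q)}`. -/
def Aq (ψ : ℕ → ℝ) (q : ℕ) : Set (ℝ × ℝ) :=
  {x | x.1 ∈ Set.Icc (0 : ℝ) 1 ∧ x.2 ∈ Set.Icc (0 : ℝ) 1 ∧
    nint (q * x.1) * nint (q * x.2) < ψ q}

/-- `R_{q,j} = {(x₁,x₂) ∈ [0,1]² : ‖qx₁‖ < q·2^{-(j-1)}, ‖qx₂‖ < ψ(q)·2^j/q}`. -/
def Rqj (ψ : ℕ → ℝ) (q j : ℕ) : Set (ℝ × ℝ) :=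
  {x | x.1 ∈ Set.Icc (0 : ℝ) 1 ∧ x.2 ∈ Set.Icc (0 : ℝ) 1 ∧
    nint (q * x.1) < q * (2 : ℝ) ^ (-((j : ℝ) - 1)) ∧
    nint (q * x.2) < ψ q * (2 : ℝ) ^ (j : ℝ) / q}

/-- `I_q = {j ∈ ℕ : 2q ≤ 2^j ≤ q/ψ(q)}`. -/
def Iq (ψ : ℕ → ℝ) (q : ℕ) : Set ℕ :=
  {j | 2 * (q : ℝ) ≤ (2 : ℝ) ^ (j : ℝ) ∧ (2 : ℝ) ^ (j : ℝ) ≤ q / ψ q}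

lemma nint_nonneg (x : ℝ) : 0 ≤ nint x := abs_nonneg _

lemma nint_le_half (x : ℝ) : nint x ≤ 1 / 2 := abs_sub_round x

lemma Nat.exists_and_not_succ {p : ℕ → Prop} (h₀ : p 0) (h : ∃ n, ¬ p n) :
    ∃ j, p j ∧ ¬ p (j + 1) := by
  by_contra! H
  obtain ⟨n, hn⟩ := h
  exact hn (Nat.rec h₀ H n)

lemma Real.rpow_neg_natCast_sub_one {b : ℝ} (hb : 0 < b) (n : ℕ) :
    b ^ (-((n : ℝ) - 1)) = b / b ^ n := by
  rw [neg_sub, Real.rpow_sub hb, Real.rpow_one, Real.rpow_natCast]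

lemma exists_two_pow_scale {q ψ d₁ d₂ : ℝ} (hq : 1 ≤ q) (hψ : 0 < ψ) (hψ₄ : ψ ≤ 1 / 4)
    (hd₁ : d₁ ≤ 1 / 2) (hd₂ : 0 ≤ d₂) (hd₂' : d₂ ≤ 1 / 2) (hd : d₁ * d₂ < ψ) :
    ∃ j : ℕ, 2 * q ≤ 2 ^ j ∧ 2 ^ j ≤ q / ψ ∧ d₁ * 2 ^ j < 2 * q ∧ d₂ * q < ψ * 2 ^ j := by
  have hqψ : 4 * q ≤ q / ψ := by rw [le_div_iff₀ hψ]; nlinarith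
  obtain ⟨j, ⟨hjT, hjd₁⟩, hmax⟩ :=
    Nat.exists_and_not_succ (p := fun j => (2 : ℝ) ^ j ≤ q / ψ ∧ d₁ * 2 ^ j < 2 * q)
      ⟨by norm_num; linarith, by norm_num; linarith⟩
      ((pow_unbounded_of_one_lt (q / ψ) one_lt_two).imp fun _ h hp => h.not_ge hp.1)
  have hj : (0 : ℝ) < 2 ^ j := by positivity
  rw [not_and_or, not_le, not_lt, pow_succ] at hmax
  rcases hmax with hT | hd₁j
  · rw [div_lt_iff₀ hψ] at hT
    exact ⟨j, by nlinarith, hjT, hjd₁, by nlinarith⟩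
  · have hd₁pos : 0 < d₁ := by nlinarith
    have hq_le : q ≤ d₁ * 2 ^ j := by linarith
    refine ⟨j, by nlinarith, hjT, hjd₁, ?_⟩
    calc d₂ * q ≤ d₂ * (d₁ * 2 ^ j) := mul_le_mul_of_nonneg_left hq_le hd₂
      _ = d₁ * d₂ * 2 ^ j := by ring
      _ < ψ * 2 ^ j := mul_lt_mul_of_pos_right hd hj

/-- The covering `A_q ⊆ ⋃_{j ∈ I_q} R_{q,j}`. -/
theorem Aq_subset_union_Rqj (ψ : ℕ → ℝ) (hψ : ∀ q, 0 < ψ q ∧ ψ q < 1 / 4)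
    (q : ℕ) (hq : 1 ≤ q) :
    Aq ψ q ⊆ ⋃ j ∈ Iq ψ q, Rqj ψ q j := by
  rintro ⟨x₁, x₂⟩ ⟨hx₁, hx₂, hx⟩
  have hq₁ : (1 : ℝ) ≤ q := by exact_mod_cast hq
  obtain ⟨j, h2q, hjT, hjd₁, hjd₂⟩ := exists_two_pow_scale hq₁ (hψ q).1 (hψ q).2.le
    (nint_le_half _) (nint_nonneg _) (nint_le_half _) hx
  have hq₀ : (0 : ℝ) < q := by linarith
  refine Set.mem_iUnion₂.mpr ⟨j, ?_, hx₁, hx₂, ?_, ?_⟩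
  · simpa only [Iq, Real.rpow_natCast] using ⟨h2q, hjT⟩
  · rw [Real.rpow_neg_natCast_sub_one two_pos, mul_div_assoc', lt_div_iff₀ (by positivity)]
    linarith
  · rwa [Real.rpow_natCast, lt_div_iff₀ hq₀]
end

section
/- Let 0 < s < 1. There is a constant C = C(s) > 0 such that for every q ∈ ℕ with q ≥ 1 and every real number 0 < ψ < 1/4, ∑_{j ∈ I} ∑_{k=1}^∞ min{1/k, q·2^{−j}} · (ψ·2^j/q) · (qk)^{−s} ≤ C · q^{−s} ψ^s, where I = {j ∈ ℕ : 2q ≤ 2^j ≤ q/ψ}. -/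
/-!
Write `ε = q 2^{-j}`, which is at most `1/2` on the range of `j`. Splitting the inner sum at
`k = ⌊1/ε⌋` and comparing the two pieces with the integrals of `x^{-s}` and `x^{-1-s}` bounds it
by `O(ε^s)`, so the `j`-th term is `O((ψ/q) 2^{j(1-s)})`. The sum over `j` is then a geometric
series of ratio `2^{1-s} > 1`, dominated by its last term, where `2^j ≤ q/ψ`.
-/

open Real Finset

lemma tsum_nat_add_rpow_neg_one_sub_le {s : ℝ} (hs : 0 < s) {N : ℕ} (hN : 0 < N) :
    ∑' n : ℕ, ((n + N + 1 : ℕ) : ℝ) ^ (-1 - s) ≤ (N : ℝ) ^ (-s) / s := by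
  have hN' : (0 : ℝ) < N := by exact_mod_cast hN
  have anti : AntitoneOn (fun x : ℝ => x ^ (-1 - s)) (Set.Ici (N : ℝ)) := fun x hx y _ hxy =>
    rpow_le_rpow_of_nonpos (hN'.trans_le hx) hxy (by linarith)
  calc ∑' n : ℕ, ((n + N + 1 : ℕ) : ℝ) ^ (-1 - s)
      ≤ ∫ x in Set.Ioi (N : ℝ), x ^ (-1 - s) :=
        anti.tsum_comp_add_le_integral N (integrableOn_Ioi_rpow_of_lt (by linarith) hN')
          fun x hx => rpow_nonneg (hN'.trans hx).le _
    _ = (N : ℝ) ^ (-s) / s := by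
        rw [integral_Ioi_rpow_of_lt (by linarith) hN', show -1 - s + 1 = -s by ring, div_neg,
          neg_div, neg_neg]

lemma sum_range_rpow_neg_le {s : ℝ} (hs0 : 0 ≤ s) (hs1 : s < 1) (N : ℕ) :
    ∑ n ∈ range N, ((n + 1 : ℕ) : ℝ) ^ (-s) ≤ (N : ℝ) ^ (1 - s) / (1 - s) := by
  have h1s : 0 < 1 - s := by linarith
  rcases N.eq_zero_or_pos with rfl | hN
  · simp [zero_rpow h1s.ne']
  have anti : AntitoneOn (fun x : ℝ => x ^ (-s)) (Set.Icc ((1 : ℕ) : ℝ) N) := fun x hx y _ hxy =>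
    rpow_le_rpow_of_nonpos (by simp at hx; linarith [hx.1]) hxy (by linarith)
  calc ∑ n ∈ range N, ((n + 1 : ℕ) : ℝ) ^ (-s)
      = 1 + ∑ n ∈ Ico 1 N, ((n + 1 : ℕ) : ℝ) ^ (-s) := by
        rw [range_eq_Ico, sum_eq_sum_Ico_succ_bot hN]
        simp
    _ ≤ 1 + ∫ x in (1 : ℝ)..N, x ^ (-s) := by
        gcongr
        exact_mod_cast anti.sum_le_integral_Ico hN
    _ = 1 + ((N : ℝ) ^ (1 - s) - 1) / (1 - s) := by
        rw [integral_rpow (Or.inl (by linarith)), neg_add_eq_sub, one_rpow]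
    _ ≤ (N : ℝ) ^ (1 - s) / (1 - s) := by
        have : 1 ≤ 1 / (1 - s) := by rw [le_div_iff₀ h1s]; linarith
        rw [sub_div]
        linarith

lemma min_inv_mul_rpow_neg_le {x : ℝ} (hx : 0 < x) (ε s : ℝ) :
    min (1 / x) ε * x ^ (-s) ≤ x ^ (-1 - s) := by
  calc min (1 / x) ε * x ^ (-s) ≤ 1 / x * x ^ (-s) := by gcongr; exact min_le_left _ _
    _ = x ^ (-1 - s) := by rw [sub_eq_add_neg, rpow_add hx, rpow_neg_one, one_div]

lemma tsum_min_inv_mul_rpow_neg_le_add {s ε : ℝ} (hs0 : 0 < s) (hs1 : s < 1) (hε : 0 ≤ ε)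
    {N : ℕ} (hN : 0 < N) :
    ∑' k : ℕ+, min (1 / ((k : ℕ) : ℝ)) ε * ((k : ℕ) : ℝ) ^ (-s) ≤
      ε * ((N : ℝ) ^ (1 - s) / (1 - s)) + (N : ℝ) ^ (-s) / s := by
  set f : ℕ → ℝ := fun n => min (1 / (n : ℝ)) ε * (n : ℝ) ^ (-s)
  have hf_nonneg (n : ℕ) : 0 ≤ f (n + 1) :=
    mul_nonneg (le_min (by positivity) hε) (by positivity)
  have hf_le_eps (n : ℕ) : f (n + 1) ≤ ε * ((n + 1 : ℕ) : ℝ) ^ (-s) :=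
    mul_le_mul_of_nonneg_right (min_le_right _ _) (by positivity)
  have hf_le_rpow (n : ℕ) : f (n + 1) ≤ ((n + 1 : ℕ) : ℝ) ^ (-1 - s) :=
    min_inv_mul_rpow_neg_le (by positivity) ε s
  have summable_rpow : Summable fun n : ℕ => ((n + 1 : ℕ) : ℝ) ^ (-1 - s) :=
    (summable_nat_add_iff 1).2 <| summable_nat_rpow.2 (by linarith)
  have summable : Summable fun n => f (n + 1) :=
    .of_nonneg_of_le hf_nonneg hf_le_rpow summable_rpow
  have head : ∑ n ∈ range N, f (n + 1) ≤ ε * ((N : ℝ) ^ (1 - s) / (1 - s)) :=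
    calc ∑ n ∈ range N, f (n + 1) ≤ ∑ n ∈ range N, ε * ((n + 1 : ℕ) : ℝ) ^ (-s) :=
          sum_le_sum fun n _ => hf_le_eps n
      _ ≤ ε * ((N : ℝ) ^ (1 - s) / (1 - s)) := by
          rw [← mul_sum]
          exact mul_le_mul_of_nonneg_left (sum_range_rpow_neg_le hs0.le hs1 N) hε
  have tail : ∑' n, f (n + N + 1) ≤ (N : ℝ) ^ (-s) / s :=
    calc ∑' n, f (n + N + 1) ≤ ∑' n : ℕ, ((n + N + 1 : ℕ) : ℝ) ^ (-1 - s) :=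
          Summable.tsum_le_tsum (fun n => hf_le_rpow (n + N))
            ((summable_nat_add_iff (f := fun n => f (n + 1)) N).2 summable)
            ((summable_nat_add_iff (f := fun n : ℕ => ((n + 1 : ℕ) : ℝ) ^ (-1 - s)) N).2
              summable_rpow)
      _ ≤ (N : ℝ) ^ (-s) / s := tsum_nat_add_rpow_neg_one_sub_le hs0 hN
  calc ∑' k : ℕ+, f k = ∑' n, f (n + 1) := tsum_pnat_eq_tsum_succ
    _ = ∑ n ∈ range N, f (n + 1) + ∑' n, f (n + N + 1) := (summable.sum_add_tsum_nat_add N).symm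
    _ ≤ _ := add_le_add head tail

lemma tsum_min_inv_mul_rpow_neg_le {s ε : ℝ} (hs0 : 0 < s) (hs1 : s < 1) (hε0 : 0 < ε)
    (hε1 : ε ≤ 1) :
    ∑' k : ℕ+, min (1 / ((k : ℕ) : ℝ)) ε * ((k : ℕ) : ℝ) ^ (-s) ≤
      (1 / (1 - s) + 2 / s) * ε ^ s := by
  set N := ⌊ε⁻¹⌋₊
  have hN : 0 < N := Nat.floor_pos.2 ((one_le_inv₀ hε0).2 hε1)
  have hN_le : (N : ℝ) ≤ ε⁻¹ := Nat.floor_le (by positivity)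
  have hN_ge : ε⁻¹ / 2 ≤ N := by
    have := Nat.lt_floor_add_one ε⁻¹
    have : (1 : ℝ) ≤ N := by exact_mod_cast hN
    linarith
  have head : ε * ((N : ℝ) ^ (1 - s) / (1 - s)) ≤ ε ^ s / (1 - s) :=
    calc ε * ((N : ℝ) ^ (1 - s) / (1 - s)) ≤ ε * (ε⁻¹ ^ (1 - s) / (1 - s)) := by
          have := sub_pos.2 hs1
          gcongr
      _ = ε ^ s / (1 - s) := by
          rw [inv_rpow hε0.le, ← rpow_neg hε0.le, mul_div_assoc',
            ← rpow_one_add' hε0.le (by ring_nf; positivity)]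
          ring_nf
  have tail : (N : ℝ) ^ (-s) / s ≤ 2 * ε ^ s / s :=
    calc (N : ℝ) ^ (-s) / s ≤ (ε⁻¹ / 2) ^ (-s) / s :=
          div_le_div_of_nonneg_right
            (rpow_le_rpow_of_nonpos (by positivity) hN_ge (by linarith)) hs0.le
      _ = 2 ^ s * ε ^ s / s := by
          rw [show ε⁻¹ / 2 = (2 * ε)⁻¹ by ring, inv_rpow (by positivity), rpow_neg (by positivity),
            inv_inv, mul_rpow zero_le_two hε0.le]
      _ ≤ 2 * ε ^ s / s := by
          gcongr
          exact rpow_le_self_of_one_le one_le_two hs1.le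
  calc _ ≤ ε * ((N : ℝ) ^ (1 - s) / (1 - s)) + (N : ℝ) ^ (-s) / s :=
        tsum_min_inv_mul_rpow_neg_le_add hs0 hs1 hε0.le hN
    _ ≤ ε ^ s / (1 - s) + 2 * ε ^ s / s := add_le_add head tail
    _ = (1 / (1 - s) + 2 / s) * ε ^ s := by ring

lemma tsum_min_inv_mul_mul_rpow_neg_le {s q D ψ : ℝ} (hs0 : 0 < s) (hs1 : s < 1) (hq : 0 < q)
    (hqD : q ≤ D) (hψ : 0 ≤ ψ) :
    ∑' k : ℕ+, min (1 / ((k : ℕ) : ℝ)) (q * D⁻¹) * (ψ * D / q) * (q * ((k : ℕ) : ℝ)) ^ (-s) ≤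
      (1 / (1 - s) + 2 / s) * (ψ / q) * D ^ (1 - s) := by
  have hD : 0 < D := hq.trans_le hqD
  calc ∑' k : ℕ+, min (1 / ((k : ℕ) : ℝ)) (q * D⁻¹) * (ψ * D / q) * (q * ((k : ℕ) : ℝ)) ^ (-s)
      = (ψ * D / q * q ^ (-s)) *
          ∑' k : ℕ+, min (1 / ((k : ℕ) : ℝ)) (q * D⁻¹) * ((k : ℕ) : ℝ) ^ (-s) := by
        rw [← tsum_mul_left]
        congr 1 with k
        rw [mul_rpow hq.le (Nat.cast_nonneg _)]
        ring
    _ ≤ (ψ * D / q * q ^ (-s)) * ((1 / (1 - s) + 2 / s) * (q * D⁻¹) ^ s) := by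
        gcongr
        exact tsum_min_inv_mul_rpow_neg_le hs0 hs1 (by positivity)
          (by rwa [← div_eq_mul_inv, div_le_one hD])
    _ = (1 / (1 - s) + 2 / s) * (ψ / q) * D ^ (1 - s) := by
        rw [mul_rpow hq.le (by positivity), inv_rpow hD.le, rpow_neg hq.le, rpow_sub hD, rpow_one]
        field_simp
lemma tsum_subtype_le_sum {α : Type*} {p : α → Prop} {t : Finset α} (hp : ∀ a, p a → a ∈ t)
    {f : {a // p a} → ℝ} {g : α → ℝ} (hfg : ∀ a, f a ≤ g a) (hg : ∀ a ∈ t, 0 ≤ g a) :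
    ∑' a, f a ≤ ∑ a ∈ t, g a := by
  refine tsum_le_of_sum_le' (sum_nonneg hg) fun u => ?_
  calc ∑ a ∈ u, f a ≤ ∑ a ∈ u, g a := sum_le_sum fun a _ => hfg a
    _ = ∑ a ∈ u.map (.subtype p), g a := (sum_map u (.subtype p) g).symm
    _ ≤ ∑ a ∈ t, g a := sum_le_sum_of_subset_of_nonneg
          (fun a ha => by obtain ⟨b, -, rfl⟩ := mem_map.1 ha; exact hp _ b.2) fun a ha _ => hg a ha

lemma exists_max_two_pow_le {T : ℝ} (hT : 1 ≤ T) :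
    ∃ J : ℕ, (2 : ℝ) ^ J ≤ T ∧ ∀ j : ℕ, (2 : ℝ) ^ j ≤ T → j ≤ J := by
  have hfloor : ⌊T⌋₊ ≠ 0 := (Nat.floor_pos.2 hT).ne'
  refine ⟨Nat.log 2 ⌊T⌋₊, ?_, fun j hj => Nat.le_log_of_pow_le one_lt_two ?_⟩
  · calc (2 : ℝ) ^ Nat.log 2 ⌊T⌋₊ ≤ ⌊T⌋₊ := by exact_mod_cast Nat.pow_log_le_self 2 hfloor
      _ ≤ T := Nat.floor_le (by linarith)
  · exact Nat.le_floor (by exact_mod_cast hj)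

lemma geom_sum_range_succ_le {x : ℝ} (hx : 1 < x) (J : ℕ) :
    ∑ j ∈ range (J + 1), x ^ j ≤ x / (x - 1) * x ^ J := by
  have hx1 : 0 < x - 1 := by linarith
  rw [geom_sum_eq hx.ne', div_mul_eq_mul_div, pow_succ']
  gcongr
  linarith [pow_pos (by linarith : 0 < x) J]

/-- Case 3 estimate: for `0 < s < 1` there is `C = C(s)` with
`∑_{j∈I} ∑_{k≥1} min{1/k, q2^{-j}} · (ψ2^j/q) · (qk)^{-s} ≤ C q^{-s} ψ^s`,
where `I = {j ∈ ℕ : 2q ≤ 2^j ≤ q/ψ}`. -/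
theorem case3_sum_le (s : ℝ) (hs0 : 0 < s) (hs1 : s < 1) :
    ∃ C : ℝ, 0 < C ∧
      ∀ q : ℕ, 1 ≤ q → ∀ ψ : ℝ, 0 < ψ → ψ < 1 / 4 →
        (∑' j : {j : ℕ // 2 * (q : ℝ) ≤ (2 : ℝ) ^ (j : ℝ) ∧ (2 : ℝ) ^ (j : ℝ) ≤ q / ψ},
          ∑' k : ℕ+,
            min (1 / ((k : ℕ) : ℝ)) ((q : ℝ) * (2 : ℝ) ^ (-((j : ℕ) : ℝ))) *
              (ψ * (2 : ℝ) ^ (((j : ℕ)) : ℝ) / q) *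
                ((q : ℝ) * ((k : ℕ) : ℝ)) ^ (-s)) ≤
          C * (q : ℝ) ^ (-s) * ψ ^ s := by
  set A := 1 / (1 - s) + 2 / s
  set x : ℝ := 2 ^ (1 - s)
  have hx : 1 < x := one_lt_rpow one_lt_two (by linarith)
  have hA : 0 < A := by
    have := sub_pos.2 hs1
    positivity
  refine ⟨A * (x / (x - 1)), mul_pos hA (div_pos (by linarith) (by linarith)), ?_⟩
  intro q hq ψ hψ0 hψ1
  have hq0 : (0 : ℝ) < q := by exact_mod_cast hq
  have hT : 1 ≤ (q : ℝ) / ψ := by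
    rw [le_div_iff₀ hψ0, one_mul]
    linarith [(Nat.one_le_cast (α := ℝ)).2 hq]
  have hpow : ∀ j : ℕ, ((2 : ℝ) ^ (j : ℝ)) ^ (1 - s) = x ^ j := fun j => by
    rw [← rpow_natCast x, ← rpow_mul zero_le_two, ← rpow_mul zero_le_two, mul_comm]
  obtain ⟨J, hJT, hJmax⟩ := exists_max_two_pow_le hT
  simp only [rpow_neg zero_le_two]
  calc _ ≤ ∑ j ∈ range (J + 1), A * (ψ / q) * x ^ j := by
        refine tsum_subtype_le_sum (fun j hj => mem_range_succ_iff.2 (hJmax j ?_)) (fun j => ?_)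
          fun _ _ => by positivity
        · simpa using hj.2
        · rw [← hpow]
          exact tsum_min_inv_mul_mul_rpow_neg_le hs0 hs1 hq0 (by linarith [j.2.1]) hψ0.le
    _ = A * (ψ / q) * ∑ j ∈ range (J + 1), x ^ j := by rw [mul_sum]
    _ ≤ A * (ψ / q) * (x / (x - 1) * ((2 : ℝ) ^ J) ^ (1 - s)) := by
        gcongr
        simpa [← rpow_natCast, hpow] using geom_sum_range_succ_le hx J
    _ ≤ A * (ψ / q) * (x / (x - 1) * ((q : ℝ) / ψ) ^ (1 - s)) := by
        gcongr
    _ = A * (x / (x - 1)) * (q : ℝ) ^ (-s) * ψ ^ s := by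
        rw [div_rpow hq0.le hψ0.le, rpow_sub hq0, rpow_sub hψ0, rpow_neg hq0.le, rpow_one, rpow_one]
        field_simp
end
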